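/- arXiv:2203.13543 — 3 statements merged into one kernel-verified Lean document; each statement's English description precedes it below -/
import Mathlib

section
/- Let σ be a word of length n and r a natural number not occurring in σ. For every 1 ≤ i ≤ n: if des(σ^{(i)}(r)) = des(σ) + 1 then im(σ,i,r) = max{im(σ,0,r), …, im(σ,i−1,r)} + 1, and otherwise im(σ,i,r) = min{im(σ,0,r), …, im(σ,i−1,r)} − 1. -/
open Polynomial List

/-- The set of (1-indexed) descents of a word `w`: indices `i` with
`1 ≤ i ≤ length w - 1` and `w_i > w_{i+1}`. -/
def descents (w : List ℕ) : Finset ℕ :=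
  (Finset.Ico 1 w.length).filter (fun i => w.getD i 0 < w.getD (i - 1) 0)

/-- The number of descents of a word. -/
def des (w : List ℕ) : ℕ := (descents w).card

/-- The major index of a word: the sum of its descents. -/
def maj (w : List ℕ) : ℕ := ∑ i ∈ descents w, i

/-- `dge i w` is the number of descents of `w` that are `≥ i`. -/
def dge (i : ℕ) (w : List ℕ) : ℕ := ((descents w).filter (fun j => i ≤ j)).card

/-- `α` is a shuffle of the disjoint words `σ` and `π`. -/
def IsShuffle (σ π α : List ℕ) : Prop :=
  α.length = σ.length + π.length ∧ σ.Sublist α ∧ π.Sublist α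

/-- `ins σ i r` is `σ^{(i)}(r)`, the word obtained by inserting `r`
immediately before `σ_{i+1}` (after `σ_n` when `i = n`). -/
def ins (σ : List ℕ) (i r : ℕ) : List ℕ := σ.insertIdx i r

/-- The major increment `im(σ,i,r) = maj(σ^{(i)}(r)) - maj(σ)`. -/
def im (σ : List ℕ) (i r : ℕ) : ℤ := (maj (ins σ i r) : ℤ) - (maj σ : ℤ)

/-- The space `i` (for `0 ≤ i ≤ n`) is an RL-space of `σ` relative to `r`. -/
def IsRL (σ : List ℕ) (r i : ℕ) : Prop :=
  (i = σ.length ∧ ∀ x ∈ σ.getLast?, x < r) ∨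
  (i = 0 ∧ ∀ x ∈ σ.head?, r < x) ∨
  (0 < i ∧ i < σ.length ∧ r < σ.getD i 0 ∧ σ.getD i 0 < σ.getD (i - 1) 0) ∨
  (0 < i ∧ i < σ.length ∧ σ.getD i 0 < σ.getD (i - 1) 0 ∧ σ.getD (i - 1) 0 < r) ∨
  (0 < i ∧ i < σ.length ∧ σ.getD (i - 1) 0 < r ∧ r < σ.getD i 0)

/-- The Gaussian binomial coefficient `[N choose M]_q`, as a polynomial in `q`:
`∏_{j=1}^{M} (1 - q^{N-M+j}) / ∏_{j=1}^{M} (1 - q^{j})` when `0 ≤ M ≤ N`, and `0` otherwise. -/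
noncomputable def gauss (N M : ℤ) : Polynomial ℚ :=
  if 0 ≤ M ∧ M ≤ N then
    (∏ j ∈ Finset.Icc 1 M.toNat, (1 - (X : Polynomial ℚ) ^ (N - M + j).toNat)) /
      (∏ j ∈ Finset.Icc 1 M.toNat, (1 - (X : Polynomial ℚ) ^ (j : ℕ)))
  else 0

/-- `delPrefix α π i` is `α^{(i)}`: the word obtained from `α` by deleting
the letters `π₁, …, π_i`. -/
def delPrefix (α π : List ℕ) (i : ℕ) : List ℕ :=
  α.filter (fun x => !((π.take i).contains x))

/-!
Let `ε_i ∈ {0, 1}` record whether inserting `r` into space `i` creates a new descent, and let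
`b_i = dge (i + 1) σ^{(i)}(r)` count the descents of `σ^{(i)}(r)` at `r` or to its right. Peeling
off the first letter of `σ` (which shifts every descent by one and adds at most one at
position `1`) shows `im(σ,i,r) = b_i + i ε_i` and `b_i = b_{i-1} + ε_i - 1`. By induction, `b_i`
and `b_i + i` are then the minimum and the maximum of `im(σ,0,r), …, im(σ,i,r)`, so the new value
`im(σ,i,r)` is `b_{i-1} + i`, one above the old maximum, when `ε_i = 1`, and `b_{i-1} - 1`, one
below the old minimum, when `ε_i = 0`.
-/

section RunningExtrema

variable {a b : ℕ → ℤ} {p : ℕ → Prop} [DecidablePred p] {n : ℕ}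

lemma sup'_range_add_one_eq_of_jumps (ha : ∀ k ≤ n, a k = b k + if p k then (k : ℤ) else 0)
    (hb : ∀ k < n, b (k + 1) = if p (k + 1) then b k else b k - 1) {k : ℕ} (hk : k ≤ n) :
    (Finset.range (k + 1)).sup' Finset.nonempty_range_add_one a = b k + k := by
  induction k with
  | zero => simp [ha 0 hk]
  | succ k ih =>
    simp only [Finset.range_add_one (n := k + 1), Finset.sup'_insert Finset.nonempty_range_add_one,
      ih (by omega), ha (k + 1) hk, hb k hk]
    split_ifs <;> push_cast <;> omega

lemma inf'_range_add_one_eq_of_jumps (ha : ∀ k ≤ n, a k = b k + if p k then (k : ℤ) else 0)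
    (hb : ∀ k < n, b (k + 1) = if p (k + 1) then b k else b k - 1) {k : ℕ} (hk : k ≤ n) :
    (Finset.range (k + 1)).inf' Finset.nonempty_range_add_one a = b k := by
  induction k with
  | zero => simp [ha 0 hk]
  | succ k ih =>
    simp only [Finset.range_add_one (n := k + 1), Finset.inf'_insert Finset.nonempty_range_add_one,
      ih (by omega), ha (k + 1) hk, hb k hk]
    split_ifs <;> push_cast <;> omega

theorem eq_sup'_add_one_or_inf'_sub_one_of_jumps
    (ha : ∀ k ≤ n, a k = b k + if p k then (k : ℤ) else 0)
    (hb : ∀ k < n, b (k + 1) = if p (k + 1) then b k else b k - 1) {i : ℕ} (hi : i ≠ 0)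
    (hin : i ≤ n) :
    (p i → a i = (Finset.range i).sup' (Finset.nonempty_range_iff.mpr hi) a + 1) ∧
    (¬ p i → a i = (Finset.range i).inf' (Finset.nonempty_range_iff.mpr hi) a - 1) := by
  obtain ⟨k, rfl⟩ := Nat.exists_eq_add_one_of_ne_zero hi
  rw [sup'_range_add_one_eq_of_jumps ha hb (by omega),
    inf'_range_add_one_eq_of_jumps ha hb (by omega), ha (k + 1) hin, hb k hin]
  constructor
  · intro h
    simp only [h, if_true]
    push_cast
    ring
  · intro h
    simp only [h, if_false, add_zero]

end RunningExtrema

def consDescent (a : ℕ) : List ℕ → ℕ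
  | [] => 0
  | b :: _ => if b < a then 1 else 0

lemma consDescent_le_one (a : ℕ) (w : List ℕ) : consDescent a w ≤ 1 := by
  cases w with
  | nil => exact zero_le_one
  | cons b u => simp only [consDescent]; split_ifs <;> omega

lemma sum_descents_cons {M : Type*} [AddCommMonoid M] (f : ℕ → M) (a : ℕ) (w : List ℕ) :
    ∑ j ∈ descents (a :: w), f j = ∑ j ∈ descents w, f (j + 1) + consDescent a w • f 1 := by
  cases w with
  | nil => simp [descents, consDescent]
  | cons b u =>
    simp only [descents, Finset.sum_filter, List.length_cons]
    rw [Finset.sum_eq_sum_Ico_succ_bot (by omega), ← Finset.sum_Ico_add']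
    simp only [consDescent, add_comm, ite_smul, one_smul, zero_smul]
    congr 1
    refine Finset.sum_congr rfl fun x hx => ?_
    obtain ⟨y, rfl⟩ : ∃ y, x = y + 1 := ⟨x - 1, by simp at hx; omega⟩
    simp

lemma des_eq_sum (w : List ℕ) : des w = ∑ _j ∈ descents w, 1 := Finset.card_eq_sum_ones _

lemma dge_eq_sum (i : ℕ) (w : List ℕ) : dge i w = ∑ j ∈ descents w, if i ≤ j then 1 else 0 :=
  Finset.card_filter _ _

lemma des_cons (a : ℕ) (w : List ℕ) : des (a :: w) = des w + consDescent a w := by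
  rw [des_eq_sum, des_eq_sum, sum_descents_cons, smul_eq_mul, mul_one]

lemma maj_cons (a : ℕ) (w : List ℕ) : maj (a :: w) = maj w + des w + consDescent a w := by
  rw [maj, maj, des_eq_sum, sum_descents_cons, Finset.sum_add_distrib, smul_eq_mul, mul_one]

lemma dge_add_one_cons {j : ℕ} (hj : 1 ≤ j) (a : ℕ) (w : List ℕ) :
    dge (j + 1) (a :: w) = dge j w := by
  rw [dge_eq_sum, dge_eq_sum, sum_descents_cons, if_neg (by omega), smul_zero, add_zero]
  simp only [add_le_add_iff_right]

lemma dge_one (w : List ℕ) : dge 1 w = des w := by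
  rw [dge, des, Finset.filter_true_of_mem]
  intro j hj
  exact (Finset.mem_Ico.mp (Finset.mem_filter.mp hj).1).1

lemma ins_zero (σ : List ℕ) (r : ℕ) : ins σ 0 r = r :: σ := List.insertIdx_zero

lemma ins_cons_add_one (a : ℕ) (τ : List ℕ) (k r : ℕ) : ins (a :: τ) (k + 1) r = a :: ins τ k r :=
  List.insertIdx_succ_cons

lemma consDescent_ins_add_one (a : ℕ) (w : List ℕ) (k r : ℕ) :
    consDescent a (ins w (k + 1) r) = consDescent a w := by
  cases w <;> simp [ins, consDescent]

lemma im_zero (σ : List ℕ) (r : ℕ) : im σ 0 r = des (ins σ 0 r) := by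
  rw [im, ins_zero, maj_cons, des_cons]
  push_cast
  ring

lemma des_ins_eq_or {σ : List ℕ} {r : ℕ} (hr : r ∉ σ) (i : ℕ) :
    des (ins σ i r) = des σ ∨ des (ins σ i r) = des σ + 1 := by
  induction σ generalizing i with
  | nil => rcases i with _ | k <;> simp [ins, des, descents]
  | cons a τ ih =>
    have hra : r ≠ a := fun h => hr (h ▸ List.mem_cons_self)
    have hrτ : r ∉ τ := fun h => hr (List.mem_cons_of_mem a h)
    rcases i with _ | _ | k
    · rw [ins_zero, des_cons]
      have := consDescent_le_one r (a :: τ)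
      omega
    · rw [ins_cons_add_one, ins_zero, des_cons, des_cons, des_cons]
      cases τ with
      | nil => simp only [consDescent]; split_ifs <;> omega
      | cons c u =>
        have hrc : r ≠ c := fun h => hrτ (h ▸ List.mem_cons_self)
        simp only [consDescent]
        split_ifs <;> omega
    · rw [ins_cons_add_one, des_cons, des_cons, consDescent_ins_add_one]
      rcases ih hrτ (k + 1) with h | h <;> omega

lemma im_eq_dge_add_mul (σ : List ℕ) (r i : ℕ) :
    im σ i r = dge (i + 1) (ins σ i r) + i * ((des (ins σ i r) : ℤ) - des σ) := by
  induction σ generalizing i with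
  | nil =>
    rcases i with _ | k
    · simp [im_zero, dge_one]
    · simp [im, ins, dge, descents]
  | cons a τ ih =>
    rcases i with _ | k
    · simp [im_zero, dge_one]
    · -- inserting at `k ≥ 1` does not change the letter after `a`; for `k = 0` both sides vanish
      have hk : (k : ℤ) * ((des (ins τ k r) : ℤ) - des τ)
          = k * ((des (ins (a :: τ) (k + 1) r) : ℤ) - des (a :: τ)) := by
        rcases k with _ | m
        · simp
        · rw [ins_cons_add_one, des_cons, des_cons, consDescent_ins_add_one]
          push_cast
          ring
      have hτ := ih k
      rw [hk] at hτ
      simp only [im, ins_cons_add_one, dge_add_one_cons (Nat.le_add_left 1 k), maj_cons,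
        des_cons] at hτ ⊢
      push_cast at hτ ⊢
      linarith

lemma dge_ins_add_one {σ : List ℕ} {r : ℕ} (hr : r ∉ σ) {i : ℕ} (hi : i < σ.length) :
    dge (i + 1 + 1) (ins σ (i + 1) r) + des σ + 1 =
      dge (i + 1) (ins σ i r) + des (ins σ (i + 1) r) := by
  induction σ generalizing i with
  | nil => simp at hi
  | cons a τ ih =>
    have hra : r ≠ a := fun h => hr (h ▸ List.mem_cons_self)
    have hrτ : r ∉ τ := fun h => hr (List.mem_cons_of_mem a h)
    rcases i with _ | k
    · simp only [ins_cons_add_one, ins_zero, zero_add, dge_add_one_cons le_rfl, dge_one,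
        des_cons, consDescent]
      split_ifs <;> omega
    · rw [ins_cons_add_one, ins_cons_add_one, dge_add_one_cons (by omega),
        dge_add_one_cons (by omega), des_cons, des_cons, consDescent_ins_add_one]
      have := ih hrτ (i := k) (by simp at hi; omega)
      simp only [add_assoc, Nat.reduceAdd] at this ⊢
      omega

/-- Each new major increment is either one more than the maximum, or one less than the
minimum, of the preceding major increments, according to whether the insertion creates
a new descent or not. -/
theorem im_max_or_min (n : ℕ) (σ : List ℕ) (hσl : σ.length = n)
    (r : ℕ) (hr : r ∉ σ) (i : ℕ) (hi1 : 1 ≤ i) (hin : i ≤ n) :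
    (des (ins σ i r) = des σ + 1 →
      im σ i r =
        (Finset.range i).sup' (Finset.nonempty_range_iff.mpr (by omega))
          (fun j => im σ j r) + 1) ∧
    (des (ins σ i r) ≠ des σ + 1 →
      im σ i r =
        (Finset.range i).inf' (Finset.nonempty_range_iff.mpr (by omega))
          (fun j => im σ j r) - 1) := by
  subst hσl
  refine eq_sup'_add_one_or_inf'_sub_one_of_jumps (a := fun j => im σ j r)
    (b := fun k => (dge (k + 1) (ins σ k r) : ℤ)) (p := fun k => des (ins σ k r) = des σ + 1)
    (fun k _ => ?_) (fun k hk => ?_) (by omega) hin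
  · rw [im_eq_dge_add_mul]
    rcases des_ins_eq_or hr k with h | h <;> simp [h]
  · have := dge_ins_add_one hr hk
    rcases des_ins_eq_or hr (k + 1) with h | h <;> simp [h] <;> omega
end

section
/- Let σ be a word with des(σ) = r, π = π₁⋯π_n a word with des(π) = s, σ and π disjoint, and α a shuffle of σ and π with des(α) = k > r. For 0 ≤ i ≤ n let α^{(i)} be the word obtained from α by deleting π₁, …, π_i, and set t(i) = maj(α^{(i−1)}) − maj(α^{(i)}) − d_i(π). If i₁ is the least index in {1,…,n} with des(α^{(i₁−1)}) = des(α^{(i₁)}) + 1, then t(i₁) ≥ k − s. -/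
open Polynomial List

/-!
Deleting one letter from a word lowers the descent number by at most one. When it does lower
it, the major index drops by at least the descent number of the longer word: descents to the
right of the deleted letter each move one place left, and those to its left are too few to
outweigh the position at which the descent disappeared. Deleting `π₁, π₂, …` one at a time from
`α`, the descent number stays `k` until step `i₁`, so `maj(α^{(i₁-1)}) - maj(α^{(i₁)}) ≥ k`,
while `d_{i₁}(π) ≤ des π = s`.
-/

lemma descents_cons_cons (c d : ℕ) (w : List ℕ) :
    descents (c :: d :: w) =
      (if d < c then {1} else ∅) ∪ (descents (d :: w)).map (addRightEmbedding 1) := by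
  ext i
  simp only [descents, Finset.mem_union, Finset.mem_filter, Finset.mem_Ico, Finset.mem_map,
    addRightEmbedding_apply]
  rcases i with _ | _ | i
  · split_ifs <;> simp
  · split_ifs <;> simp [*]
  · split_ifs <;> simp

lemma disjoint_descents_cons_cons (c d : ℕ) (w : List ℕ) :
    Disjoint (if d < c then {1} else ∅) ((descents (d :: w)).map (addRightEmbedding 1)) := by
  split_ifs
  · exact Finset.disjoint_singleton_left.mpr (by simp [descents])
  · exact Finset.disjoint_empty_left _

@[simp] lemma des_nil : des [] = 0 := rfl

@[simp] lemma des_singleton (a : ℕ) : des [a] = 0 := rfl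

@[simp] lemma maj_singleton (a : ℕ) : maj [a] = 0 := rfl

lemma des_cons_cons (c d : ℕ) (w : List ℕ) :
    des (c :: d :: w) = (if d < c then 1 else 0) + des (d :: w) := by
  rw [des, descents_cons_cons, Finset.card_union_of_disjoint (disjoint_descents_cons_cons c d w),
    Finset.card_map, des]
  split_ifs <;> rfl

lemma maj_cons_cons (c d : ℕ) (w : List ℕ) :
    maj (c :: d :: w) = (if d < c then 1 else 0) + maj (d :: w) + des (d :: w) := by
  rw [maj, descents_cons_cons, Finset.sum_union (disjoint_descents_cons_cons c d w),
    Finset.sum_map]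
  simp only [addRightEmbedding_apply, Finset.sum_add_distrib, Finset.sum_const, smul_eq_mul,
    mul_one]
  split_ifs <;> simp [maj, des, Nat.add_assoc]

section Insert

variable (a : ℕ) (v : List ℕ)

lemma des_le_des_append_cons : ∀ u : List ℕ, des (u ++ v) ≤ des (u ++ a :: v)
  | [] => by cases v <;> simp [des_cons_cons]
  | [c] => by
    rcases v with _ | ⟨b, v⟩ <;> simp only [cons_append, nil_append, des_cons_cons, des_singleton] <;>
      split_ifs <;> omega
  | c :: e :: u => by
    simp only [cons_append, des_cons_cons]
    have := des_le_des_append_cons (e :: u)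
    simp only [cons_append] at this
    omega

lemma des_append_cons_le : ∀ u : List ℕ, des (u ++ a :: v) ≤ des (u ++ v) + 1
  | [] => by
    rcases v with _ | ⟨b, v⟩
    · simp
    · simp only [nil_append, des_cons_cons]
      split_ifs <;> omega
  | [c] => by
    rcases v with _ | ⟨b, v⟩ <;> simp only [cons_append, nil_append, des_cons_cons, des_singleton] <;>
      split_ifs <;> omega
  | c :: e :: u => by
    simp only [cons_append, des_cons_cons]
    have := des_append_cons_le (e :: u)
    simp only [cons_append] at this
    omega

lemma des_add_maj_le_of_des_append_cons_eq :
    ∀ u : List ℕ, des (u ++ a :: v) = des (u ++ v) + 1 →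
      des (u ++ a :: v) + maj (u ++ v) ≤ maj (u ++ a :: v)
  | [] => by
    rcases v with _ | ⟨b, v⟩
    · simp
    · simp only [nil_append, des_cons_cons, maj_cons_cons]
      split_ifs <;> omega
  | [c] => by
    rcases v with _ | ⟨b, v⟩ <;>
      simp only [cons_append, nil_append, des_cons_cons, maj_cons_cons, des_singleton,
        maj_singleton] <;>
      split_ifs <;> omega
  | c :: e :: u => by
    have ih := des_add_maj_le_of_des_append_cons_eq (e :: u)
    simp only [cons_append] at ih ⊢
    simp only [des_cons_cons, maj_cons_cons]
    intro h
    have := ih (by omega)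
    split_ifs at h ⊢ <;> omega

end Insert

lemma IsShuffle.nodup {σ π α : List ℕ} (hα : IsShuffle σ π α) (hσ : σ.Nodup) (hπ : π.Nodup)
    (hσπ : σ.Disjoint π) : α.Nodup := by
  obtain ⟨hlen, hσα, hπα⟩ := hα
  have hnd : (σ ++ π).Nodup := nodup_append'.mpr ⟨hσ, hπ, hσπ⟩
  have hsub : σ ++ π ⊆ α := append_subset.mpr ⟨hσα.subset, hπα.subset⟩
  exact ((hnd.subperm hsub).perm_of_length_le (by simp [hlen])).nodup_iff.mp hnd

section DelPrefix

variable {α π : List ℕ}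

@[simp] lemma delPrefix_zero : delPrefix α π 0 = α := by
  simp [delPrefix]

lemma delPrefix_succ (hα : α.Nodup) {j : ℕ} (hj : j < π.length) :
    delPrefix α π (j + 1) = (delPrefix α π j).erase π[j] := by
  unfold delPrefix
  rw [take_succ_eq_append_getElem hj, (hα.filter _).erase_eq_filter, filter_filter]
  refine filter_congr fun x _ => ?_
  rw [contains_append, Bool.not_or, Bool.and_comm]
  simp only [contains_cons, contains_nil, Bool.or_false]
  rfl

lemma getElem_mem_delPrefix (hπ : π.Nodup) (hπα : π ⊆ α) {j : ℕ} (hj : j < π.length) :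
    π[j] ∈ delPrefix α π j := by
  have hnd : (π.take j ++ [π[j]]).Nodup :=
    take_succ_eq_append_getElem hj ▸ hπ.sublist (take_sublist _ _)
  have hnotin : π[j] ∉ π.take j := fun h => (nodup_append'.mp hnd).2.2 h (mem_singleton_self _)
  simpa [delPrefix] using ⟨hπα (getElem_mem hj), hnotin⟩

lemma exists_delPrefix_eq_append_cons (hα : α.Nodup) (hπ : π.Nodup) (hπα : π ⊆ α) {j : ℕ}
    (hj : j < π.length) :
    ∃ u v, delPrefix α π j = u ++ π[j] :: v ∧ delPrefix α π (j + 1) = u ++ v := by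
  obtain ⟨u, v, -, hsplit, herase⟩ := exists_erase_eq (getElem_mem_delPrefix hπ hπα hj)
  exact ⟨u, v, hsplit, delPrefix_succ hα hj ▸ herase⟩

lemma des_delPrefix_eq_of_forall_ne (hα : α.Nodup) (hπ : π.Nodup) (hπα : π ⊆ α) :
    ∀ i ≤ π.length, (∀ j < i, des (delPrefix α π j) ≠ des (delPrefix α π (j + 1)) + 1) →
      des (delPrefix α π i) = des α
  | 0, _, _ => by simp
  | i + 1, hi, hne => by
    obtain ⟨u, v, hsplit, hdel⟩ := exists_delPrefix_eq_append_cons hα hπ hπα hi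
    have ih := des_delPrefix_eq_of_forall_ne hα hπ hπα i (by omega) fun j hj => hne j (by omega)
    have hi := hne i (by omega)
    rw [hsplit] at hi ih
    rw [hdel] at hi ⊢
    have := des_le_des_append_cons π[i] v u
    have := des_append_cons_le π[i] v u
    omega

end DelPrefix

theorem t_first_drop_ge_general (n s k : ℕ) (σ π α : List ℕ)
    (hπl : π.length = n) (hσnd : σ.Nodup) (hπnd : π.Nodup)
    (hdisj : σ.Disjoint π) (hs : des π = s)
    (hα : IsShuffle σ π α) (hk : des α = k)
    (t : ℕ → ℤ)
    (ht : ∀ i, t i = (maj (delPrefix α π (i - 1)) : ℤ) - (maj (delPrefix α π i) : ℤ)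
      - (dge i π : ℤ))
    (i₁ : ℕ) (hi1 : 1 ≤ i₁) (hi1n : i₁ ≤ n)
    (hdrop : des (delPrefix α π (i₁ - 1)) = des (delPrefix α π i₁) + 1)
    (hleast : ∀ j, 1 ≤ j → j < i₁ →
      des (delPrefix α π (j - 1)) ≠ des (delPrefix α π j) + 1) :
    (k : ℤ) - s ≤ t i₁ := by
  obtain ⟨i, rfl⟩ : ∃ i, i₁ = i + 1 := ⟨i₁ - 1, by omega⟩
  have hαnd := hα.nodup hσnd hπnd hdisj
  have hπα : π ⊆ α := hα.2.2.subset
  have hdes : des (delPrefix α π i) = k :=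
    hk ▸ des_delPrefix_eq_of_forall_ne hαnd hπnd hπα i (by omega) fun j hj =>
      hleast (j + 1) (by omega) (by omega)
  obtain ⟨u, v, hsplit, hdel⟩ := exists_delPrefix_eq_append_cons hαnd hπnd hπα (j := i) (by omega)
  simp only [Nat.add_sub_cancel] at hdrop
  rw [hsplit, hdel] at hdrop
  rw [hsplit] at hdes
  have hmaj := des_add_maj_le_of_des_append_cons_eq π[i] v u hdrop
  have hdge : dge (i + 1) π ≤ s := hs ▸ Finset.card_filter_le _ _
  rw [ht, Nat.add_sub_cancel, hsplit, hdel]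
  omega

/-- If `i₁` is the least index at which deleting `π_{i₁}` drops the descent number,
then `t(i₁) ≥ k - s`. -/
theorem t_first_drop_ge (m n r s k : ℕ) (σ π α : List ℕ)
    (hσl : σ.length = m) (hπl : π.length = n) (hσnd : σ.Nodup) (hπnd : π.Nodup)
    (hdisj : σ.Disjoint π) (hr : des σ = r) (hs : des π = s)
    (hα : IsShuffle σ π α) (hk : des α = k) (hkr : r < k)
    (t : ℕ → ℤ)
    (ht : ∀ i, t i = (maj (delPrefix α π (i - 1)) : ℤ) - (maj (delPrefix α π i) : ℤ)
      - (dge i π : ℤ))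
    (i₁ : ℕ) (hi1 : 1 ≤ i₁) (hi1n : i₁ ≤ n)
    (hdrop : des (delPrefix α π (i₁ - 1)) = des (delPrefix α π i₁) + 1)
    (hleast : ∀ j, 1 ≤ j → j < i₁ →
      des (delPrefix α π (j - 1)) ≠ des (delPrefix α π j) + 1) :
    (k : ℤ) - s ≤ t i₁ :=
  t_first_drop_ge_general n s k σ π α hπl hσnd hπnd hdisj hs hα hk t ht i₁ hi1 hi1n hdrop hleast
end

section
/- Let σ = σ₁⋯σ_m be a word of length m, p a natural number not occurring in σ, and 1 ≤ i ≤ m. Let σ[i] = σ₁⋯σ_i be the prefix of σ of length i. Then im(σ[i], j, p) + d_i(σ) = im(σ, j, p) for all 0 ≤ j < i, and moreover im(σ[i], i, p) = i if σ_i > p and im(σ[i], i, p) = 0 if σ_i < p. -/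
open Polynomial List

/-! The descents of the prefix `σ[i]` are exactly the descents of `σ` below `i`, so
`maj σ = maj σ[i] + ∑_{t ∈ Des σ, t ≥ i} t`. Inserting `p` at a position `j < i` makes the first
`i + 1` letters of `σ^{(j)}(p)` equal to `σ[i]^{(j)}(p)` and shifts every descent `t ≥ i` of `σ`
to `t + 1`; comparing the two splittings, each of the `d_i(σ)` shifted descents contributes one
extra unit. Appending `p` to `σ[i]` creates the single new descent `i` exactly when `σ_i > p`. -/

namespace List

variable {α : Type*}

theorem getD_take_eq_ite (l : List α) (i k : ℕ) (d : α) :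
    (l.take i).getD k d = if k < i then l.getD k d else d := by
  simp only [getD_eq_getElem?_getD, getElem?_take]
  split_ifs <;> rfl

theorem getD_insertIdx_eq_ite (l : List α) {j : ℕ} (x : α) (k : ℕ) (d : α)
    (hj : j ≤ l.length) :
    (l.insertIdx j x).getD k d =
      if k < j then l.getD k d else if k = j then x else l.getD (k - 1) d := by
  simp only [getD_eq_getElem?_getD, getElem?_insertIdx]
  split_ifs <;> first | rfl | omega

theorem take_succ_insertIdx_of_le (l : List α) {j i : ℕ} (x : α) (h : j ≤ i) :
    (l.insertIdx j x).take (i + 1) = (l.take i).insertIdx j x := by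
  ext k
  simp only [getElem?_take, getElem?_insertIdx, length_take]
  split_ifs <;> first | rfl | omega

end List

open List

theorem mem_descents {w : List ℕ} {t : ℕ} :
    t ∈ descents w ↔ 1 ≤ t ∧ t < w.length ∧ w.getD t 0 < w.getD (t - 1) 0 := by
  simp [descents, and_assoc]

theorem descents_take (σ : List ℕ) (i : ℕ) :
    descents (σ.take i) = (descents σ).filter (· < i) := by
  ext t
  simp only [descents, Finset.mem_filter, Finset.mem_Ico, length_take, getD_take_eq_ite]
  constructor
  · rintro ⟨⟨h1, h2⟩, h3⟩
    rw [if_pos (by omega), if_pos (by omega)] at h3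
    exact ⟨⟨⟨h1, by omega⟩, h3⟩, by omega⟩
  · rintro ⟨⟨⟨h1, h2⟩, h3⟩, h4⟩
    rw [if_pos h4, if_pos (by omega)]
    exact ⟨⟨h1, by omega⟩, h3⟩

theorem maj_eq_maj_take_add (σ : List ℕ) (i : ℕ) :
    maj σ = maj (σ.take i) + ∑ t ∈ (descents σ).filter (i ≤ ·), t := by
  simp only [maj, descents_take, ← Finset.sum_filter_add_sum_filter_not (descents σ) (· < i),
    not_lt]

theorem descents_insertIdx_filter_le (σ : List ℕ) {j i : ℕ} (p : ℕ) (hj : j < i)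
    (hjσ : j ≤ σ.length) :
    (descents (σ.insertIdx j p)).filter (i + 1 ≤ ·) =
      ((descents σ).filter (i ≤ ·)).map (addRightEmbedding 1) := by
  ext t
  simp only [descents, Finset.mem_map, Finset.mem_filter, Finset.mem_Ico, addRightEmbedding_apply,
    length_insertIdx_of_le_length hjσ, getD_insertIdx_eq_ite σ p _ 0 hjσ]
  constructor
  · rintro ⟨⟨⟨h1, h2⟩, h3⟩, h4⟩
    rw [if_neg (by omega), if_neg (by omega), if_neg (by omega), if_neg (by omega)] at h3
    exact ⟨t - 1, ⟨⟨⟨by omega, by omega⟩, by rwa [Nat.sub_sub]⟩, by omega⟩, by omega⟩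
  · rintro ⟨s, ⟨⟨⟨h1, h2⟩, h3⟩, h4⟩, rfl⟩
    rw [if_neg (by omega), if_neg (by omega), if_neg (by omega), if_neg (by omega)]
    exact ⟨⟨⟨by omega, by omega⟩, by simpa using h3⟩, by omega⟩

theorem im_take_add_dge (σ : List ℕ) {j i : ℕ} (p : ℕ) (hj : j < i) (hi : i ≤ σ.length) :
    im (σ.take i) j p + dge i σ = im σ j p := by
  have hjσ : j ≤ σ.length := by omega
  have hσ := maj_eq_maj_take_add σ i
  have hins := maj_eq_maj_take_add (σ.insertIdx j p) (i + 1)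
  rw [take_succ_insertIdx_of_le σ p hj.le, descents_insertIdx_filter_le σ p hj hjσ,
    Finset.sum_map] at hins
  simp only [addRightEmbedding_apply, Finset.sum_add_distrib, Finset.sum_const, smul_eq_mul,
    mul_one] at hins
  simp only [im, ins, dge]
  omega

theorem descents_append_singleton (w : List ℕ) (p : ℕ) :
    descents (w ++ [p]) =
      if p < w.getD (w.length - 1) 0 then insert w.length (descents w) else descents w := by
  have hprefix : ∀ k < w.length, (w ++ [p]).getD k 0 = w.getD k 0 := getD_append w [p] 0
  ext t
  rw [mem_descents, length_append, length_singleton]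
  rcases lt_trichotomy t w.length with ht | rfl | ht
  · rw [hprefix t ht, hprefix (t - 1) (by omega)]
    split_ifs <;> simp [mem_descents, ht, ht.ne, Nat.lt_succ_of_lt ht]
  · rcases Nat.eq_zero_or_pos w.length with hnil | hpos
    · simp [length_eq_zero_iff.mp hnil, descents]
    · rw [hprefix (w.length - 1) (by omega), getD_append_right w [p] 0 _ le_rfl]
      simp only [Nat.sub_self, getD_cons_zero]
      split_ifs <;> simp only [Finset.mem_insert, true_or, iff_true, mem_descents] <;> omega
  · split_ifs <;> simp only [Finset.mem_insert, mem_descents] <;> omega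

theorem im_length (w : List ℕ) (p : ℕ) :
    im w w.length p = if p < w.getD (w.length - 1) 0 then (w.length : ℤ) else 0 := by
  have hw : w.length ∉ descents w := by simp [descents]
  simp only [im, ins, insertIdx_length_self, maj, descents_append_singleton]
  split_ifs
  · rw [Finset.sum_insert hw]; push_cast; ring
  · ring

theorem im_prefix_general (m : ℕ) (σ : List ℕ) (hσl : σ.length = m)
    (p : ℕ) (i : ℕ) (hi1 : 1 ≤ i) (him : i ≤ m) :
    (∀ j, j < i → im (σ.take i) j p + (dge i σ : ℤ) = im σ j p) ∧
    (p < σ.getD (i - 1) 0 → im (σ.take i) i p = (i : ℤ)) ∧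
    (σ.getD (i - 1) 0 < p → im (σ.take i) i p = 0) := by
  subst hσl
  have hlen : (σ.take i).length = i := length_take_of_le him
  have hlast : (σ.take i).getD (i - 1) 0 = σ.getD (i - 1) 0 := by
    rw [getD_take_eq_ite, if_pos (by omega)]
  have him_last := im_length (σ.take i) p
  rw [hlen, hlast] at him_last
  refine ⟨fun j hj => im_take_add_dge σ p hj him, fun h => ?_, fun h => ?_⟩
  · rw [him_last, if_pos h]
  · rw [him_last, if_neg (by omega)]

/-- Major increments of insertions into a prefix `σ[i] = σ₁⋯σ_i`:
`im(σ[i], j, p) + d_i(σ) = im(σ, j, p)` for `0 ≤ j < i`, and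
`im(σ[i], i, p)` is `i` or `0` according to whether `σ_i > p` or `σ_i < p`. -/
theorem im_prefix (m : ℕ) (σ : List ℕ) (hσl : σ.length = m) (hσnd : σ.Nodup)
    (p : ℕ) (hp : p ∉ σ) (i : ℕ) (hi1 : 1 ≤ i) (him : i ≤ m) :
    (∀ j, j < i → im (σ.take i) j p + (dge i σ : ℤ) = im σ j p) ∧
    (p < σ.getD (i - 1) 0 → im (σ.take i) i p = (i : ℤ)) ∧
    (σ.getD (i - 1) 0 < p → im (σ.take i) i p = 0) :=
  im_prefix_general m σ hσl p i hi1 him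
end
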